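/- arXiv:1009.5638 — 3 statements merged into one kernel-verified Lean document; each statement's English description precedes it below -/
import Mathlib

section
/- Let Ψ: ℤⁿ∖{0} → ℝ⁺ satisfy the monotonicity condition Ψ(a) ≥ Ψ(b) whenever |a_i| ≤ |b_i| for all i, and suppose ∑_{a ∈ ℤⁿ∖{0}} Ψ(a) < ∞. Then for all but finitely many a ∈ ℤⁿ∖{0}, Ψ(a) < ∏_{i: a_i ≠ 0} |a_i|^{−1}. -/
/-!
If `Ψ a ≥ Ψ₀ a = 1 / P` with `P = ∏ i, max 1 |a i|`, then by monotonicity `Ψ ≥ 1 / P` on the `P`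
nonzero vectors `b` with `1 ≤ b i ≤ |a i|` on the support of `a` and `b i = 0` off it. A summable
series cannot be `≥ 1 / #s` on arbitrarily large finite sets `s`: outside a fixed finite set of terms
every partial sum is `< 1 / 2`. Hence `P`, and with it every `|a i|`, is bounded.
-/

open Finset

theorem Summable.exists_card_le_of_inv_card_le {α : Type*} {f : α → ℝ} (hf : Summable f) :
    ∃ N : ℕ, ∀ s : Finset α, (∀ b ∈ s, (#s : ℝ)⁻¹ ≤ f b) → #s ≤ N := by
  obtain ⟨F, hF⟩ := summable_iff_vanishing.mp hf (Set.Iio (1 / 2)) (Iio_mem_nhds one_half_pos)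
  refine ⟨2 * #F, fun s hs => ?_⟩
  classical
  by_contra! hs_large
  have hsdiff_large : (#s : ℝ) < 2 * #(s \ F) := by
    have := le_card_sdiff F s
    exact_mod_cast (by omega : #s < 2 * #(s \ F))
  have hs_pos : (0 : ℝ) < #s := by exact_mod_cast (by omega : 0 < #s)
  have hsum_small : ∑ b ∈ s \ F, f b < 1 / 2 := hF _ sdiff_disjoint
  have hsum_large : 1 / 2 < ∑ b ∈ s \ F, f b := calc
    1 / 2 < #(s \ F) * (#s : ℝ)⁻¹ := by rw [lt_mul_inv_iff₀ hs_pos]; linarith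
    _ ≤ ∑ b ∈ s \ F, f b := by
      simpa only [nsmul_eq_mul] using
        card_nsmul_le_sum _ f _ fun b hb => hs b (sdiff_subset hb)
  linarith

section SupportBox

variable {ι : Type*} [Fintype ι]

theorem prod_filter_ne_zero_abs_inv (a : ι → ℤ) :
    ∏ i ∈ univ.filter (fun i => a i ≠ 0), |(a i : ℝ)|⁻¹ =
      ((∏ i, max 1 (a i).natAbs : ℕ) : ℝ)⁻¹ := by
  rw [prod_inv_distrib, prod_filter]
  push_cast
  congr 1
  refine prod_congr rfl fun i _ => ?_
  split_ifs with h
  · have : 1 ≤ |(a i : ℝ)| := by exact_mod_cast Int.one_le_abs h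
    rw [Nat.cast_natAbs, Int.cast_abs, max_eq_right this]
  · simp [not_not.mp h]

theorem natAbs_le_prod_max_one_natAbs (a : ι → ℤ) (i : ι) :
    (a i).natAbs ≤ ∏ j, max 1 (a j).natAbs :=
  (le_max_right _ _).trans <|
    single_le_prod' (f := fun j => max 1 (a j).natAbs) (fun _ _ => le_max_left _ _) (mem_univ i)

theorem finite_setOf_prod_max_one_natAbs_le (N : ℕ) :
    {a : ι → ℤ | ∏ i, max 1 (a i).natAbs ≤ N}.Finite := by
  refine (Set.Finite.pi fun _ => Set.finite_Icc (-(N : ℤ)) N).subset fun a ha i _ => ?_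
  have := (natAbs_le_prod_max_one_natAbs a i).trans ha
  exact ⟨by omega, by omega⟩

variable [DecidableEq ι]

/-- `min 1 |a i|` is `1` where `a i ≠ 0` and `0` where `a i = 0`, so this box consists of the `b` with
`1 ≤ b i ≤ |a i|` on the support of `a` and `b i = 0` off it. -/
noncomputable def supportBox (a : ι → ℤ) : Finset (ι → ℤ) :=
  Fintype.piFinset fun i => Icc (min (1 : ℤ) |a i|) |a i|

variable {a b : ι → ℤ}

theorem mem_supportBox : b ∈ supportBox a ↔ ∀ i, min 1 |a i| ≤ b i ∧ b i ≤ |a i| := by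
  simp only [supportBox, Fintype.mem_piFinset, mem_Icc]

theorem abs_le_of_mem_supportBox (hb : b ∈ supportBox a) (i : ι) : |b i| ≤ |a i| := by
  obtain ⟨hlo, hhi⟩ := mem_supportBox.mp hb i
  have : 0 ≤ min (1 : ℤ) |a i| := le_min zero_le_one (abs_nonneg _)
  exact abs_le.mpr ⟨by linarith [abs_nonneg (a i)], hhi⟩

theorem ne_zero_of_mem_supportBox (hb : b ∈ supportBox a) (ha : a ≠ 0) : b ≠ 0 := by
  obtain ⟨i, hi⟩ := Function.ne_iff.mp ha
  have hlo := (mem_supportBox.mp hb i).1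
  rw [min_eq_left (Int.one_le_abs hi)] at hlo
  exact fun hb0 => by simp [hb0] at hlo

theorem card_supportBox (a : ι → ℤ) : #(supportBox a) = ∏ i, max 1 (a i).natAbs := by
  rw [supportBox, Fintype.card_piFinset]
  refine prod_congr rfl fun i _ => ?_
  rw [Int.card_Icc, Int.abs_eq_natAbs]
  omega

end SupportBox

theorem stmt1_general (n : ℕ) (Ψ : (Fin n → ℤ) → ℝ)
    (hmono : ∀ a b : Fin n → ℤ, a ≠ 0 → b ≠ 0 →
      (∀ i, |a i| ≤ |b i|) → Ψ b ≤ Ψ a)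
    (hsum : Summable (fun a : {a : Fin n → ℤ // a ≠ 0} => Ψ a.1)) :
    {a : Fin n → ℤ | a ≠ 0 ∧
      ¬ Ψ a < ∏ i ∈ Finset.univ.filter (fun i => a i ≠ 0), (|(a i : ℝ)|)⁻¹}.Finite := by
  obtain ⟨N, hN⟩ :=
    (summable_subtype_iff_indicator (s := {a | a ≠ 0}).mp hsum).exists_card_le_of_inv_card_le
  refine (finite_setOf_prod_max_one_natAbs_le N).subset fun a ⟨ha, hbad⟩ => ?_
  rw [prod_filter_ne_zero_abs_inv, not_lt, ← card_supportBox] at hbad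
  rw [Set.mem_ofPred_eq, ← card_supportBox]
  refine hN _ fun b hb => ?_
  have hb0 := ne_zero_of_mem_supportBox hb ha
  rw [Set.indicator_of_mem hb0]
  exact hbad.trans (hmono b a hb0 ha (abs_le_of_mem_supportBox hb))

theorem stmt1 (n : ℕ) (hn : 1 ≤ n) (Ψ : (Fin n → ℤ) → ℝ)
    (hpos : ∀ a : Fin n → ℤ, a ≠ 0 → 0 < Ψ a)
    (hmono : ∀ a b : Fin n → ℤ, a ≠ 0 → b ≠ 0 →
      (∀ i, |a i| ≤ |b i|) → Ψ b ≤ Ψ a)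
    (hsum : Summable (fun a : {a : Fin n → ℤ // a ≠ 0} => Ψ a.1)) :
    {a : Fin n → ℤ | a ≠ 0 ∧
      ¬ Ψ a < ∏ i ∈ Finset.univ.filter (fun i => a i ≠ 0), (|(a i : ℝ)|)⁻¹}.Finite :=
  stmt1_general n Ψ hmono hsum
end

section
/- Let μ be a finite doubling Borel regular measure on a metric space X which can be covered by countably many arbitrarily small balls, let f: X → ℝ⁺ be a uniformly continuous bounded function, and define ν(A) := ∫_A f dμ. Let (S_Q)_{Q∈ℕ} be a sequence of measurable subsets of X and 0 < ω < 1 a constant such that for every sufficiently small closed ball B ⊆ X, limsup_{Q→∞} μ(S_Q ∩ B) ≤ ω μ(B). Then for every measurable set W ⊆ X, limsup_{Q→∞} ν(S_Q ∩ W) ≤ ω ν(W). -/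
/-!
Fix an open set `U ⊇ W`. By the Vitali covering theorem for doubling measures, `W` is
covered, up to a null set, by countably many disjoint small closed balls inside `U`; all but
finitely many of them carry total measure `< ε`, and on each of the finitely many the ball
hypothesis applies, so `limsup μ (S_Q ∩ W) ≤ ω μ U + ε`. Outer regularity turns this into
`limsup μ (S_Q ∩ W) ≤ ω μ W` for every set `W`. For the weighted measure, write
`∫_{S_Q ∩ W} f = ∫_0^∞ μ (S_Q ∩ W ∩ {f > t}) dt` and apply the reverse Fatou lemma in `t`,
the integrands being dominated by `μ (W ∩ {f > t})`.
-/

open MeasureTheory Filter Metric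
open scoped NNReal ENNReal

namespace ENNReal

variable {ι : Type*} {l : Filter ι}

theorem limsup_add_le' (u v : ι → ℝ≥0∞) :
    limsup (u + v) l ≤ limsup u l + limsup v l := by
  refine ENNReal.le_of_forall_pos_le_add fun ε hε hfin => ?_
  have hε2 : (ε / 2 : ℝ≥0∞) ≠ 0 := by simpa using hε.ne'
  have hu := ENNReal.lt_add_right (ne_top_of_le_ne_top hfin.ne le_self_add) hε2
  have hv := ENNReal.lt_add_right (ne_top_of_le_ne_top hfin.ne le_add_self) hε2
  refine limsup_le_of_le (by isBoundedDefault) ?_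
  filter_upwards [eventually_lt_of_limsup_lt hu, eventually_lt_of_limsup_lt hv] with n hun hvn
  calc u n + v n ≤ limsup u l + ε / 2 + (limsup v l + ε / 2) := add_le_add hun.le hvn.le
    _ = limsup u l + limsup v l + ε := by rw [add_add_add_comm, ENNReal.add_halves]

theorem limsup_finsetSum_le {κ : Type*} (s : Finset κ) (u : κ → ι → ℝ≥0∞) :
    limsup (fun n => ∑ a ∈ s, u a n) l ≤ ∑ a ∈ s, limsup (u a) l := by
  classical
  induction s using Finset.induction_on with
  | empty => exact (limsup_const_bot (α := ℝ≥0∞) (f := l)).le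
  | insert a s ha ih =>
    simp only [Finset.sum_insert ha]
    exact (limsup_add_le' (u a) _).trans (add_le_add le_rfl ih)

end ENNReal

theorem exists_finset_measure_inter_le_sum_add {X κ : Type*} [MeasurableSpace X] {μ : Measure X}
    {W : Set X} {u : Set κ} {B : κ → Set X} (hu : u.Countable)
    (hcov : μ (W \ ⋃ a ∈ u, B a) = 0) (hfin : ∑' a : u, μ (B a) ≠ ∞) {ε : ℝ≥0∞} (hε : ε ≠ 0) :
    ∃ v : Finset u, ∀ T : Set X, μ (T ∩ W) ≤ ∑ a ∈ v, μ (T ∩ B a) + ε := by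
  have : Countable u := hu.to_subtype
  obtain ⟨v, hv⟩ : ∃ v : Finset u, ∑' a : {a : u // a ∉ v}, μ (B a) < ε :=
    ((ENNReal.tendsto_tsum_compl_atTop_zero hfin).eventually
      (gt_mem_nhds (pos_iff_ne_zero.2 hε))).exists
  refine ⟨v, fun T => ?_⟩
  have hsub : T ∩ W ⊆ (⋃ a ∈ u, T ∩ B a) ∪ (W \ ⋃ a ∈ u, B a) := by
    rintro x ⟨hxT, hxW⟩
    by_cases hx : x ∈ ⋃ a ∈ u, B a
    · obtain ⟨a, ha, hxa⟩ := Set.mem_iUnion₂.1 hx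
      exact Or.inl (Set.mem_iUnion₂.2 ⟨a, ha, hxT, hxa⟩)
    · exact Or.inr ⟨hxW, hx⟩
  calc μ (T ∩ W) ≤ μ (⋃ a ∈ u, T ∩ B a) + μ (W \ ⋃ a ∈ u, B a) :=
        (measure_mono hsub).trans (measure_union_le _ _)
    _ = μ (⋃ a ∈ u, T ∩ B a) := by rw [hcov, add_zero]
    _ ≤ ∑' a : u, μ (T ∩ B a) := measure_biUnion_le μ hu _
    _ = ∑ a ∈ v, μ (T ∩ B a) + ∑' a : {a : u // a ∉ v}, μ (T ∩ B a) := by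
      rw [← Finset.tsum_subtype v fun a => μ (T ∩ B a)]
      exact (ENNReal.summable.tsum_add_tsum_compl (s := (v : Set u)) ENNReal.summable).symm
    _ ≤ ∑ a ∈ v, μ (T ∩ B a) + ε := by
      gcongr
      exact (ENNReal.tsum_le_tsum fun a => measure_mono Set.inter_subset_right).trans hv.le

def DoublingWith {X : Type*} [PseudoMetricSpace X] [MeasurableSpace X] (μ : Measure X)
    (D : ℝ≥0) : Prop :=
  ∀ (x : X) (r : ℝ), 0 < r → μ (closedBall x (2 * r)) ≤ D * μ (closedBall x r)

section Doubling

variable {X : Type*} [PseudoMetricSpace X] [MeasurableSpace X] {μ : Measure X} {D : ℝ≥0}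

theorem DoublingWith.measure_closedBall_three_mul_le (hD : DoublingWith μ D) (x : X) {r : ℝ}
    (hr : 0 < r) : μ (closedBall x (3 * r)) ≤ ↑(D * D) * μ (closedBall x r) :=
  calc μ (closedBall x (3 * r)) ≤ μ (closedBall x (2 * (2 * r))) :=
        measure_mono (closedBall_subset_closedBall (by linarith))
    _ ≤ D * (D * μ (closedBall x r)) :=
        (hD x (2 * r) (by positivity)).trans (by gcongr; exact hD x r hr)
    _ = ↑(D * D) * μ (closedBall x r) := by push_cast; ring

theorem DoublingWith.exists_disjoint_closedBall_covering_ae [OpensMeasurableSpace X]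
    [SecondCountableTopology X] [IsLocallyFiniteMeasure μ] (hD : DoublingWith μ D)
    {W U : Set X} (hU : IsOpen U) (hWU : W ⊆ U) {r₀ : ℝ} (hr₀ : 0 < r₀) :
    ∃ u : Set (X × ℝ), u.Countable ∧ (∀ p ∈ u, 0 < p.2 ∧ p.2 ≤ r₀ ∧ closedBall p.1 p.2 ⊆ U) ∧
      u.PairwiseDisjoint (fun p => closedBall p.1 p.2) ∧
      μ (W \ ⋃ p ∈ u, closedBall p.1 p.2) = 0 := by
  set t : Set (X × ℝ) := {p | 0 < p.2 ∧ p.2 ≤ r₀ ∧ closedBall p.1 p.2 ⊆ U}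
  have hfine : ∀ x ∈ W, ∀ ε > (0 : ℝ), ∃ p ∈ t, p.2 ≤ ε ∧ p.1 = x := by
    intro x hx ε hε
    obtain ⟨δ, hδ, hδU⟩ := nhds_basis_closedBall.mem_iff.1 (hU.mem_nhds (hWU hx))
    refine ⟨(x, min ε (min δ r₀)), ⟨lt_min hε (lt_min hδ hr₀), ?_, ?_⟩, min_le_left _ _, rfl⟩
    · exact (min_le_right _ _).trans (min_le_right _ _)
    · exact (closedBall_subset_closedBall ((min_le_right _ _).trans (min_le_left _ _))).trans hδU
  obtain ⟨u, hut, hu, hdisj, hcov⟩ := Vitali.exists_disjoint_covering_ae μ W t (D * D)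
    Prod.snd Prod.fst (fun p => closedBall p.1 p.2) (fun _ _ => subset_rfl)
    (fun p hp => hD.measure_closedBall_three_mul_le p.1 hp.1)
    (fun p hp => ⟨p.1, ball_subset_interior_closedBall (mem_ball_self hp.1)⟩)
    (fun _ _ => isClosed_closedBall) hfine
  exact ⟨u, hu, fun p hp => hut hp, hdisj, hcov⟩

variable [IsFiniteMeasure μ] {ι : Type*} {l : Filter ι} {S : ι → Set X} {c : ℝ≥0∞} {r₀ : ℝ}

theorem DoublingWith.limsup_measure_inter_le_mul_of_isOpen [OpensMeasurableSpace X]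
    [SecondCountableTopology X] (hD : DoublingWith μ D) (hr₀ : 0 < r₀)
    (hS : ∀ (x : X) (r : ℝ), 0 < r → r ≤ r₀ →
      limsup (fun Q => μ (S Q ∩ closedBall x r)) l ≤ c * μ (closedBall x r))
    {W U : Set X} (hU : IsOpen U) (hWU : W ⊆ U) :
    limsup (fun Q => μ (S Q ∩ W)) l ≤ c * μ U := by
  obtain ⟨u, hu, hut, hdisj, hcov⟩ := hD.exists_disjoint_closedBall_covering_ae hU hWU hr₀
  have hsum : ∑' p : u, μ (closedBall p.1.1 p.1.2) ≤ μ U := by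
    rw [← measure_biUnion hu hdisj fun _ _ => measurableSet_closedBall]
    exact measure_mono (Set.iUnion₂_subset fun p hp => (hut p hp).2.2)
  refine ENNReal.le_of_forall_pos_le_add fun ε hε _ => ?_
  obtain ⟨v, hv⟩ := exists_finset_measure_inter_le_sum_add hu hcov
    (ne_top_of_le_ne_top (measure_ne_top μ U) hsum) (ENNReal.coe_ne_zero.2 hε.ne')
  calc limsup (fun Q => μ (S Q ∩ W)) l
      ≤ limsup ((fun Q => ∑ p ∈ v, μ (S Q ∩ closedBall p.1.1 p.1.2)) + fun _ => (ε : ℝ≥0∞)) l :=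
        limsup_le_limsup (Eventually.of_forall fun Q => hv (S Q))
    _ ≤ limsup (fun Q => ∑ p ∈ v, μ (S Q ∩ closedBall p.1.1 p.1.2)) l +
        limsup (fun _ => (ε : ℝ≥0∞)) l := ENNReal.limsup_add_le' _ _
    _ ≤ ∑ p ∈ v, c * μ (closedBall p.1.1 p.1.2) + ε := by
        refine add_le_add ((ENNReal.limsup_finsetSum_le _ _).trans (Finset.sum_le_sum ?_))
          (limsup_le_of_le (by isBoundedDefault) (.of_forall fun _ => le_rfl))
        exact fun p _ => hS _ _ (hut p p.2).1 (hut p p.2).2.1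
    _ ≤ c * μ U + ε := by
        rw [← Finset.mul_sum]
        gcongr
        exact (ENNReal.sum_le_tsum v).trans hsum

theorem DoublingWith.limsup_measure_inter_le_mul [BorelSpace X] [SecondCountableTopology X]
    (hD : DoublingWith μ D) (hr₀ : 0 < r₀)
    (hS : ∀ (x : X) (r : ℝ), 0 < r → r ≤ r₀ →
      limsup (fun Q => μ (S Q ∩ closedBall x r)) l ≤ c * μ (closedBall x r))
    (hc₀ : c ≠ 0) (hc : c ≠ ∞) (W : Set X) :
    limsup (fun Q => μ (S Q ∩ W)) l ≤ c * μ W := by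
  simp only [W.measure_eq_iInf_isOpen μ, ENNReal.mul_iInf_of_ne hc₀ hc, le_iInf_iff]
  exact fun U hWU hU => hD.limsup_measure_inter_le_mul_of_isOpen hr₀ hS hU hWU

end Doubling

section LayerCake

variable {X : Type*} [MeasurableSpace X] {μ : Measure X} {f : X → ℝ}

theorem setLIntegral_ofReal_eq_lintegral_measure_inter_lt (hf : Measurable f) (hf0 : 0 ≤ f)
    (s : Set X) :
    ∫⁻ x in s, ENNReal.ofReal (f x) ∂μ = ∫⁻ t in Set.Ioi 0, μ (s ∩ {x | t < f x}) := by
  rw [lintegral_eq_lintegral_meas_lt _ (.of_forall hf0) hf.aemeasurable]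
  refine lintegral_congr fun t => ?_
  rw [Measure.restrict_apply (measurableSet_lt measurable_const hf), Set.inter_comm]

theorem limsup_setLIntegral_inter_le_mul {S : ℕ → Set X} {c : ℝ≥0∞}
    (hS : ∀ A, MeasurableSet A → limsup (fun Q => μ (S Q ∩ A)) atTop ≤ c * μ A)
    (hf : Measurable f) (hf0 : 0 ≤ f) {W : Set X} (hW : MeasurableSet W)
    (hfin : ∫⁻ x in W, ENNReal.ofReal (f x) ∂μ ≠ ∞) :
    limsup (fun Q => ∫⁻ x in S Q ∩ W, ENNReal.ofReal (f x) ∂μ) atTop ≤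
      c * ∫⁻ x in W, ENNReal.ofReal (f x) ∂μ := by
  have hanti : ∀ T : Set X, Antitone fun t => μ (T ∩ (W ∩ {x | t < f x})) := fun T t t' htt' =>
    measure_mono (Set.inter_subset_inter_right _
      (Set.inter_subset_inter_right _ fun x hx => htt'.trans_lt hx))
  simp only [setLIntegral_ofReal_eq_lintegral_measure_inter_lt hf hf0, Set.inter_assoc] at hfin ⊢
  rw [← lintegral_const_mul _ (by simpa using (hanti Set.univ).measurable)]
  calc _ ≤ ∫⁻ t in Set.Ioi 0, limsup (fun Q => μ (S Q ∩ (W ∩ {x | t < f x}))) atTop :=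
        limsup_lintegral_le _ (fun Q => (hanti (S Q)).measurable)
          (fun Q => .of_forall fun t => measure_mono Set.inter_subset_right) hfin
    _ ≤ _ := lintegral_mono fun t => hS _ (hW.inter (measurableSet_lt measurable_const hf))

theorem limsup_setIntegral_inter_le_mul {S : ℕ → Set X} {ω : ℝ} (hω : 0 ≤ ω)
    (hS : ∀ A, MeasurableSet A →
      limsup (fun Q => μ (S Q ∩ A)) atTop ≤ ENNReal.ofReal ω * μ A)
    (hf : Measurable f) (hf0 : 0 ≤ f) {W : Set X} (hW : MeasurableSet W)
    (hfi : IntegrableOn f W μ) :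
    limsup (fun Q => ∫ x in S Q ∩ W, f x ∂μ) atTop ≤ ω * ∫ x in W, f x ∂μ := by
  have hfin := hfi.lintegral_lt_top.ne
  simp only [integral_eq_lintegral_of_nonneg_ae (.of_forall hf0) hf.aestronglyMeasurable]
  rw [ENNReal.limsup_toReal_eq hfin
    (.of_forall fun Q => lintegral_mono_set Set.inter_subset_right)]
  calc _ ≤ (ENNReal.ofReal ω * ∫⁻ x in W, ENNReal.ofReal (f x) ∂μ).toReal :=
        ENNReal.toReal_mono (ENNReal.mul_ne_top ENNReal.ofReal_ne_top hfin)
          (limsup_setLIntegral_inter_le_mul hS hf hf0 hW hfin)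
    _ = _ := by rw [ENNReal.toReal_mul, ENNReal.toReal_ofReal hω]

end LayerCake

theorem stmt9_general {X : Type*} [MetricSpace X] [MeasurableSpace X] [BorelSpace X]
    (μ : Measure X) [IsFiniteMeasure μ]
    (hdoubling : ∃ D : ℝ≥0, ∀ (x : X) (r : ℝ), 0 < r →
      μ (closedBall x (2 * r)) ≤ (D : ℝ≥0∞) * μ (closedBall x r))
    (hcover : ∀ δ : ℝ, 0 < δ → ∃ (c : ℕ → X) (r : ℕ → ℝ),
      (∀ i, 0 < r i ∧ r i < δ) ∧ (Set.univ : Set X) ⊆ ⋃ i, ball (c i) (r i))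
    (f : X → ℝ) (hfpos : ∀ x, 0 < f x) (hfbdd : ∃ M : ℝ, ∀ x, f x ≤ M)
    (hfuc : UniformContinuous f)
    (S : ℕ → Set X)
    (ω : ℝ) (hω0 : 0 < ω)
    (hball : ∃ r₀ : ℝ, 0 < r₀ ∧ ∀ (x : X) (r : ℝ), 0 < r → r ≤ r₀ →
      limsup (fun Q => μ (S Q ∩ closedBall x r)) atTop ≤
        ENNReal.ofReal ω * μ (closedBall x r)) :
    ∀ W : Set X, MeasurableSet W →
      limsup (fun Q => ∫ x in S Q ∩ W, f x ∂μ) atTop ≤ ω * ∫ x in W, f x ∂μ := by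
  intro W hW
  have : SecondCountableTopology X := by
    refine secondCountable_of_almost_dense_set fun δ hδ => ?_
    obtain ⟨c, r, hr, hcov⟩ := hcover δ hδ
    refine ⟨Set.range c, Set.countable_range c, fun x => ?_⟩
    obtain ⟨i, hi⟩ := Set.mem_iUnion.1 (hcov (Set.mem_univ x))
    exact ⟨c i, Set.mem_range_self i, (mem_ball.1 hi).le.trans (hr i).2.le⟩
  obtain ⟨D, hD⟩ := hdoubling
  obtain ⟨r₀, hr₀, hball⟩ := hball
  obtain ⟨M, hM⟩ := hfbdd
  have hf : Measurable f := hfuc.continuous.measurable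
  have hf0 : 0 ≤ f := fun x => (hfpos x).le
  have hfi : Integrable f μ := .of_bound hf.aestronglyMeasurable M
    (.of_forall fun x => (Real.norm_of_nonneg (hf0 x)).trans_le (hM x))
  have hsets : ∀ A : Set X, MeasurableSet A →
      limsup (fun Q => μ (S Q ∩ A)) atTop ≤ ENNReal.ofReal ω * μ A := fun A _ =>
    DoublingWith.limsup_measure_inter_le_mul hD hr₀ hball (ENNReal.ofReal_pos.2 hω0).ne'
      ENNReal.ofReal_ne_top A
  exact limsup_setIntegral_inter_le_mul hω0.le hsets hf hf0 hW hfi.integrableOn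

theorem stmt9 {X : Type*} [MetricSpace X] [MeasurableSpace X] [BorelSpace X]
    (μ : Measure X) [IsFiniteMeasure μ] [μ.Regular]
    (hdoubling : ∃ D : ℝ≥0, ∀ (x : X) (r : ℝ), 0 < r →
      μ (closedBall x (2 * r)) ≤ (D : ℝ≥0∞) * μ (closedBall x r))
    (hcover : ∀ δ : ℝ, 0 < δ → ∃ (c : ℕ → X) (r : ℕ → ℝ),
      (∀ i, 0 < r i ∧ r i < δ) ∧ (Set.univ : Set X) ⊆ ⋃ i, ball (c i) (r i))
    (f : X → ℝ) (hfpos : ∀ x, 0 < f x) (hfbdd : ∃ M : ℝ, ∀ x, f x ≤ M)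
    (hfuc : UniformContinuous f)
    (S : ℕ → Set X) (hS : ∀ Q, MeasurableSet (S Q))
    (ω : ℝ) (hω0 : 0 < ω) (hω1 : ω < 1)
    (hball : ∃ r₀ : ℝ, 0 < r₀ ∧ ∀ (x : X) (r : ℝ), 0 < r → r ≤ r₀ →
      limsup (fun Q => μ (S Q ∩ closedBall x r)) atTop ≤
        ENNReal.ofReal ω * μ (closedBall x r)) :
    ∀ W : Set X, MeasurableSet W →
      limsup (fun Q => ∫ x in S Q ∩ W, f x ∂μ) atTop ≤ ω * ∫ x in W, f x ∂μ :=
  stmt9_general μ hdoubling hcover f hfpos hfbdd hfuc S ω hω0 hball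
end

section
/- Let U₀ be a ball in ℝ^m, p ∈ (0,1), and let g: Ṽ → ℝ be a C¹ function on an open set Ṽ ⊆ ℝ^{m−1} with |∇g(y)| ≤ p^{−1} for all y ∈ Ṽ (sup norm). Let R := {(g(y), y) : y ∈ V} for some V ⊆ Ṽ, and suppose η > 0 is such that the η-neighborhood (in ℝ^{m−1}) of V is contained in Ṽ. Then the η-neighborhood of R in ℝ^m (in the sup norm) is contained in {(λ + g(y), y) : |λ| ≤ η m p^{−1}, y ∈ Ṽ}, i.e. Δ(R, η) ⊆ Δ₁(Graph(g), η m p^{−1}). -/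
/-! Bounded partials give `‖Dg‖ ≤ k p⁻¹` in the operator norm for the sup norm, so by the mean
value inequality on the closed `η`-ball around `y ∈ V` (which lies in `Vt`) the value of `g` moves by
at most `k p⁻¹ η`. The first coordinate moves by less than `η ≤ η p⁻¹`. -/

open Metric

theorem ContinuousLinearMap.norm_le_sum_norm_apply_single {ι F : Type*} [Fintype ι]
    [DecidableEq ι] [NormedAddCommGroup F] [NormedSpace ℝ F] (f : (ι → ℝ) →L[ℝ] F) :
    ‖f‖ ≤ ∑ i, ‖f (Pi.single i 1)‖ := by
  refine f.opNorm_le_bound (by positivity) fun v => ?_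
  calc ‖f v‖ = ‖∑ i, v i • f (Pi.single i 1)‖ := by
        simp_rw [← map_smul, ← map_sum, ← Pi.single_smul', smul_eq_mul, mul_one,
          Finset.univ_sum_single]
    _ ≤ ∑ i, ‖v i • f (Pi.single i 1)‖ := norm_sum_le _ _
    _ ≤ ∑ i, ‖f (Pi.single i 1)‖ * ‖v‖ := by
        gcongr with i
        rw [norm_smul, mul_comm]
        gcongr
        exact norm_le_pi_norm v i
    _ = (∑ i, ‖f (Pi.single i 1)‖) * ‖v‖ := (Finset.sum_mul _ _ _).symm

theorem Convex.abs_sub_le_of_abs_fderiv_single_le {ι : Type*} [Fintype ι] [DecidableEq ι]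
    {g : (ι → ℝ) → ℝ} {s : Set (ι → ℝ)} (hs : Convex ℝ s) {C : ℝ}
    (hg : ∀ y ∈ s, DifferentiableAt ℝ g y ∧ ∀ i, |fderiv ℝ g y (Pi.single i 1)| ≤ C)
    {y z : ι → ℝ} (hy : y ∈ s) (hz : z ∈ s) :
    |g z - g y| ≤ Fintype.card ι * C * dist z y := by
  have hbound : ∀ x ∈ s, ‖fderiv ℝ g x‖ ≤ Fintype.card ι * C := fun x hx =>
    calc ‖fderiv ℝ g x‖ ≤ ∑ i, ‖fderiv ℝ g x (Pi.single i 1)‖ :=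
          (fderiv ℝ g x).norm_le_sum_norm_apply_single
      _ ≤ ∑ _i : ι, C := Finset.sum_le_sum fun i _ => (hg x hx).2 i
      _ = Fintype.card ι * C := by simp
  rw [dist_eq_norm]
  exact hs.norm_image_sub_le_of_norm_fderiv_le (fun x hx => (hg x hx).1) hbound hy hz

theorem stmt11_general (k : ℕ) (p : ℝ) (hp0 : 0 < p) (hp1 : p < 1)
    (Vt : Set (Fin k → ℝ))
    (g : (Fin k → ℝ) → ℝ)
    (hgrad : ∀ y ∈ Vt, DifferentiableAt ℝ g y ∧
      ∀ i : Fin k, |fderiv ℝ g y (Pi.single i 1)| ≤ p⁻¹)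
    (V : Set (Fin k → ℝ))
    (η : ℝ)
    (hnbhd : ∀ z : Fin k → ℝ, (∃ y ∈ V, dist z y ≤ η) → z ∈ Vt)
    (R : Set (ℝ × (Fin k → ℝ))) (hR : R = {x | x.2 ∈ V ∧ x.1 = g x.2}) :
    {x : ℝ × (Fin k → ℝ) | ∃ r ∈ R, dist x r < η} ⊆
      {x : ℝ × (Fin k → ℝ) | ∃ y ∈ Vt, ∃ l : ℝ,
        |l| ≤ η * (k + 1) * p⁻¹ ∧ x = (g y + l, y)} := by
  subst hR
  rintro ⟨x, z⟩ ⟨⟨_, y⟩, ⟨hyV, hgy : _ = g y⟩, hdist⟩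
  subst hgy
  obtain ⟨hx, hz⟩ : dist x (g y) < η ∧ dist z y < η := max_lt_iff.mp hdist
  have hball : closedBall y η ⊆ Vt := fun w hw => hnbhd w ⟨y, hyV, hw⟩
  have hgz : |g z - g y| ≤ k * p⁻¹ * η := by
    have := (convex_closedBall y η).abs_sub_le_of_abs_fderiv_single_le
      (fun w hw => hgrad w (hball hw)) (mem_closedBall_self (dist_nonneg.trans hz.le))
      (mem_closedBall.2 hz.le)
    rw [Fintype.card_fin] at this
    exact this.trans (by gcongr)
  have hp : 1 ≤ p⁻¹ := (one_le_inv₀ hp0).mpr hp1.le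
  refine ⟨z, hball (mem_closedBall.2 hz.le), x - g z, ?_, by simp⟩
  calc |x - g z| ≤ |x - g y| + |g z - g y| := by
        rw [abs_sub_comm (g z)]; exact abs_sub_le _ _ _
    _ ≤ η * p⁻¹ + k * p⁻¹ * η := by
        gcongr
        calc |x - g y| ≤ η := (Real.dist_eq _ _ ▸ hx).le
          _ ≤ η * p⁻¹ := le_mul_of_one_le_right (dist_nonneg.trans hx.le) hp
    _ = η * (k + 1) * p⁻¹ := by ring

/-- if `g` has all partial derivatives bounded by `p⁻¹` on `Vt`, `R` is the
graph of `g` over `V ⊆ Vt`, and the `η`-neighborhood of `V` lies in `Vt`, then the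
`η`-neighborhood of `R` (sup norm on `ℝ × ℝ^{m-1}`) is contained in the
`η·m·p⁻¹`-thickening of the graph of `g` in the first coordinate direction. -/
theorem stmt11 (k : ℕ) (p : ℝ) (hp0 : 0 < p) (hp1 : p < 1)
    (Vt : Set (Fin k → ℝ)) (hVt : IsOpen Vt)
    (g : (Fin k → ℝ) → ℝ) (hg : ContDiffOn ℝ 1 g Vt)
    (hgrad : ∀ y ∈ Vt, DifferentiableAt ℝ g y ∧
      ∀ i : Fin k, |fderiv ℝ g y (Pi.single i 1)| ≤ p⁻¹)
    (V : Set (Fin k → ℝ)) (hV : V ⊆ Vt)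
    (η : ℝ) (hη : 0 < η)
    (hnbhd : ∀ z : Fin k → ℝ, (∃ y ∈ V, dist z y ≤ η) → z ∈ Vt)
    (R : Set (ℝ × (Fin k → ℝ))) (hR : R = {x | x.2 ∈ V ∧ x.1 = g x.2}) :
    {x : ℝ × (Fin k → ℝ) | ∃ r ∈ R, dist x r < η} ⊆
      {x : ℝ × (Fin k → ℝ) | ∃ y ∈ Vt, ∃ l : ℝ,
        |l| ≤ η * (k + 1) * p⁻¹ ∧ x = (g y + l, y)} :=
  stmt11_general k p hp0 hp1 Vt g hgrad V η hnbhd R hR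
end
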